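/- Let n ≥ 2, let 0 ≤ x₁ < x₂ < … < xₙ ≤ 1, let K(x,y) = cosh(min(x,y))·cosh(1−max(x,y))/sinh(1), and let G = (K(xᵢ,xⱼ))₁≤i,j≤n be the (invertible) Gram matrix. Set x₀ = −x₁ and x_{n+1} = 2 − xₙ. Then for every vector v ∈ ℝⁿ, vᵀ G⁻¹ v = Σ_{i=1}^{n} [ tanh((x_{i+1}−xᵢ)/2) + tanh((xᵢ−x_{i−1})/2) ]·vᵢ² + Σ_{i=2}^{n} (vᵢ − v_{i−1})² / sinh(xᵢ − x_{i−1}). -/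

import Mathlib

/-!
Each column `K(·, y)` of `G` is a multiple of `cosh t` for `t ≤ y` and of `cosh (1 - t)` for
`t ≥ y`. For a solution of `u'' = u` the one-sided derivatives at a node are exact linear
combinations of the values at that node and its neighbour, so on the `j`-th column the jump of the
derivative at `x i` is `δᵢⱼ`: the slope of `K(·, y)` drops by exactly `1` at `y` because
`sinh y cosh (1 - y) + cosh y sinh (1 - y) = sinh 1`. These jump functionals therefore invert `G`,
and summation by parts turns `Σᵢ vᵢ · jumpᵢ(v)` into the quadratic form on the right.
-/

open Real Finset Matrix

lemma Fin.sum_univ_add_one_eq_sum_Icc {M : Type*} [AddCommMonoid M] (n : ℕ) (g : ℕ → M) :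
    ∑ i : Fin n, g (i + 1) = ∑ i ∈ Icc 1 n, g i := by
  rw [Fin.sum_univ_eq_sum_range (fun i => g (i + 1)), range_eq_Ico, sum_Ico_add',
    Ico_add_one_right_eq_Icc, zero_add]

lemma tanh_half_mul_sinh (d : ℝ) : tanh (d / 2) * sinh d = cosh d - 1 := by
  have hs := sinh_two_mul (d / 2)
  have hc := cosh_two_mul (d / 2)
  rw [mul_div_cancel₀ d two_ne_zero] at hs hc
  rw [tanh_eq_sinh_div_cosh, hs, hc, cosh_sq]
  field_simp
  ring

lemma tanh_half_mul_add_div_sinh (A c : ℝ) {t s : ℝ} (hts : t ≠ s) :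
    tanh ((s - t) / 2) * (A * cosh (s - c)) + (A * cosh (s - c) - A * cosh (t - c)) / sinh (s - t)
      = A * sinh (s - c) := by
  have hsinh : sinh (s - t) ≠ 0 := sinh_ne_zero.2 (sub_ne_zero.2 hts.symm)
  have h := cosh_sub (s - c) (s - t)
  rw [sub_sub_sub_cancel_left] at h
  rw [h]
  field_simp
  linear_combination A * cosh (s - c) * tanh_half_mul_sinh (s - t)

lemma div_sinh_sub_tanh_half_mul (A c : ℝ) {t s : ℝ} (hts : t ≠ s) :
    (A * cosh (s - c) - A * cosh (t - c)) / sinh (s - t) - tanh ((s - t) / 2) * (A * cosh (t - c))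
      = A * sinh (t - c) := by
  have hsinh : sinh (s - t) ≠ 0 := sinh_ne_zero.2 (sub_ne_zero.2 hts.symm)
  have h := cosh_add (t - c) (s - t)
  rw [sub_add_sub_cancel'] at h
  rw [h]
  field_simp
  linear_combination -A * cosh (t - c) * tanh_half_mul_sinh (s - t)

noncomputable section

def sobolevKernel (s t : ℝ) : ℝ := cosh (min s t) * cosh (1 - max s t) / sinh 1

lemma sobolevKernel_of_le {s t : ℝ} (h : s ≤ t) :
    sobolevKernel s t = cosh (1 - t) / sinh 1 * cosh s := by
  rw [sobolevKernel, min_eq_left h, max_eq_right h]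
  ring

lemma sobolevKernel_of_ge {s t : ℝ} (h : t ≤ s) :
    sobolevKernel s t = cosh t / sinh 1 * cosh (s - 1) := by
  rw [sobolevKernel, min_eq_right h, max_eq_left h, ← cosh_neg (s - 1), neg_sub]
  ring

/- One-sided derivatives at `x i` of the function that interpolates `f` at the nodes, solves
`u'' = u` between them, and is a multiple of `cosh t` left of `x 1` and of `cosh (1 - t)` right of
`x n`. These extensions are encoded by the ghost nodes: at `i = 1` the term with
`x (i - 1) = x 0 = -x 1` is `tanh (x 1) * f 1`. -/
@[simps]
def leftSlope (x : ℕ → ℝ) (i : ℕ) : (ℕ → ℝ) →ₗ[ℝ] ℝ where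
  toFun f := tanh ((x i - x (i - 1)) / 2) * f i +
    if 2 ≤ i then (f i - f (i - 1)) / sinh (x i - x (i - 1)) else 0
  map_add' f g := by simp only [Pi.add_apply]; split_ifs <;> ring
  map_smul' c f := by simp only [Pi.smul_apply, smul_eq_mul, RingHom.id_apply]; split_ifs <;> ring

@[simps]
def rightSlope (n : ℕ) (x : ℕ → ℝ) (i : ℕ) : (ℕ → ℝ) →ₗ[ℝ] ℝ where
  toFun f := (if i + 1 ≤ n then (f (i + 1) - f i) / sinh (x (i + 1) - x i) else 0) -
    tanh ((x (i + 1) - x i) / 2) * f i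
  map_add' f g := by simp only [Pi.add_apply]; split_ifs <;> ring
  map_smul' c f := by simp only [Pi.smul_apply, smul_eq_mul, RingHom.id_apply]; split_ifs <;> ring

def nodeJump (n : ℕ) (x : ℕ → ℝ) (i : ℕ) : (ℕ → ℝ) →ₗ[ℝ] ℝ := leftSlope x i - rightSlope n x i

variable {n : ℕ} {x : ℕ → ℝ}

section Hyperbolic

variable {f : ℕ → ℝ} {i : ℕ} (A c : ℝ)

lemma leftSlope_of_hyperbolic (hi : 2 ≤ i) (hx : x (i - 1) ≠ x i)
    (hf : ∀ k ∈ ({i - 1, i} : Finset ℕ), f k = A * cosh (x k - c)) :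
    leftSlope x i f = A * sinh (x i - c) := by
  rw [leftSlope_apply, if_pos hi, hf i (by simp), hf (i - 1) (by simp)]
  exact tanh_half_mul_add_div_sinh A c hx

lemma rightSlope_of_hyperbolic (hi : i + 1 ≤ n) (hx : x i ≠ x (i + 1))
    (hf : ∀ k ∈ ({i, i + 1} : Finset ℕ), f k = A * cosh (x k - c)) :
    rightSlope n x i f = A * sinh (x i - c) := by
  rw [rightSlope_apply, if_pos hi, hf i (by simp), hf (i + 1) (by simp)]
  exact div_sinh_sub_tanh_half_mul A c hx

lemma leftSlope_one (hx : x 0 = -x 1) (hf : f 1 = A * cosh (x 1)) :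
    leftSlope x 1 f = A * sinh (x 1) := by
  rw [leftSlope_apply, if_neg (by norm_num), hf, Nat.sub_self, hx, sub_neg_eq_add,
    add_self_div_two, tanh_eq_sinh_div_cosh]
  field_simp [(cosh_pos (x 1)).ne']
  ring

lemma rightSlope_last (hx : x (n + 1) = 2 - x n) (hf : f n = A * cosh (x n - 1)) :
    rightSlope n x n f = A * sinh (x n - 1) := by
  rw [rightSlope_apply, if_neg (by omega), hf, hx, show (2 - x n - x n) / 2 = -(x n - 1) by ring,
    tanh_neg, tanh_eq_sinh_div_cosh]
  field_simp [(cosh_pos (x n - 1)).ne']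
  ring

end Hyperbolic

lemma node_le_node (hmono : ∀ i j : ℕ, 1 ≤ i → i < j → j ≤ n → x i < x j)
    (a b : ℕ) (ha : 1 ≤ a) (hab : a ≤ b) (hb : b ≤ n) : x a ≤ x b :=
  hab.eq_or_lt.elim (fun h => h ▸ le_rfl) (fun h => (hmono a b ha h hb).le)

lemma leftSlope_sobolevKernel (hmono : ∀ i j : ℕ, 1 ≤ i → i < j → j ≤ n → x i < x j)
    (hx : x 0 = -x 1) {i j : ℕ} (hi : 1 ≤ i) (hin : i ≤ n) (hj : 1 ≤ j) (hjn : j ≤ n) :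
    leftSlope x i (fun k => sobolevKernel (x k) (x j)) =
      if i ≤ j then cosh (1 - x j) / sinh 1 * sinh (x i)
      else cosh (x j) / sinh 1 * sinh (x i - 1) := by
  have hle := node_le_node hmono
  split_ifs with hij
  · obtain rfl | h2 : i = 1 ∨ 2 ≤ i := by omega
    · exact leftSlope_one _ hx (sobolevKernel_of_le (hle 1 j le_rfl hij hjn))
    · simpa using leftSlope_of_hyperbolic (f := fun k => sobolevKernel (x k) (x j))
        (cosh (1 - x j) / sinh 1) 0 h2 (hmono (i - 1) i (by omega) (by omega) hin).ne
        fun k hk => by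
          simp only [mem_insert, mem_singleton] at hk
          rw [sub_zero, sobolevKernel_of_le (hle k j (by omega) (by omega) hjn)]
  · exact leftSlope_of_hyperbolic _ 1 (by omega) (hmono (i - 1) i (by omega) (by omega) hin).ne
      fun k hk => by
        simp only [mem_insert, mem_singleton] at hk
        exact sobolevKernel_of_ge (hle j k hj (by omega) (by omega))

lemma rightSlope_sobolevKernel (hmono : ∀ i j : ℕ, 1 ≤ i → i < j → j ≤ n → x i < x j)
    (hx : x (n + 1) = 2 - x n) {i j : ℕ} (hi : 1 ≤ i) (hin : i ≤ n) (hj : 1 ≤ j) (hjn : j ≤ n) :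
    rightSlope n x i (fun k => sobolevKernel (x k) (x j)) =
      if i < j then cosh (1 - x j) / sinh 1 * sinh (x i)
      else cosh (x j) / sinh 1 * sinh (x i - 1) := by
  have hle := node_le_node hmono
  split_ifs with hij
  · simpa using rightSlope_of_hyperbolic (n := n) (f := fun k => sobolevKernel (x k) (x j))
      (cosh (1 - x j) / sinh 1) 0 (by omega) (hmono i (i + 1) hi (by omega) (by omega)).ne
      fun k hk => by
        simp only [mem_insert, mem_singleton] at hk
        rw [sub_zero, sobolevKernel_of_le (hle k j (by omega) (by omega) hjn)]
  · obtain rfl | hn : i = n ∨ i + 1 ≤ n := by omega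
    · exact rightSlope_last _ hx (sobolevKernel_of_ge (hle j i hj (by omega) le_rfl))
    · exact rightSlope_of_hyperbolic _ 1 hn (hmono i (i + 1) hi (by omega) hn).ne
        fun k hk => by
          simp only [mem_insert, mem_singleton] at hk
          exact sobolevKernel_of_ge (hle j k hj (by omega) (by omega))

lemma nodeJump_sobolevKernel (hmono : ∀ i j : ℕ, 1 ≤ i → i < j → j ≤ n → x i < x j)
    (hx0 : x 0 = -x 1) (hxn : x (n + 1) = 2 - x n)
    {i j : ℕ} (hi : 1 ≤ i) (hin : i ≤ n) (hj : 1 ≤ j) (hjn : j ≤ n) :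
    nodeJump n x i (fun k => sobolevKernel (x k) (x j)) = if i = j then 1 else 0 := by
  rw [nodeJump, LinearMap.sub_apply, leftSlope_sobolevKernel hmono hx0 hi hin hj hjn,
    rightSlope_sobolevKernel hmono hxn hi hin hj hjn]
  rcases lt_trichotomy i j with h | rfl | h
  · simp [h.le, h, h.ne]
  · have hsinh : sinh 1 = sinh (x i) * cosh (1 - x i) + cosh (x i) * sinh (1 - x i) := by
      rw [← sinh_add, add_sub_cancel]
    simp only [le_refl, lt_irrefl, if_true, if_false]
    rw [show x i - 1 = -(1 - x i) by ring, sinh_neg]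
    field_simp [sinh_ne_zero.2 one_ne_zero]
    linear_combination -hsinh
  · simp [not_le.2 h, not_lt.2 h.le, h.ne']

lemma sum_mul_nodeJump (w f : ℕ → ℝ) :
    ∑ i ∈ Icc 1 n, w i * nodeJump n x i f =
      ∑ i ∈ Icc 1 n, (tanh ((x (i + 1) - x i) / 2) + tanh ((x i - x (i - 1)) / 2)) * (w i * f i)
        + ∑ i ∈ Icc 2 n, (w i - w (i - 1)) * (f i - f (i - 1)) / sinh (x i - x (i - 1)) := by
  set q : ℕ → ℝ := fun i => (f i - f (i - 1)) / sinh (x i - x (i - 1)) with hq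
  have hleft : ∑ i ∈ Icc 1 n, (if 2 ≤ i then w i * q i else 0) = ∑ i ∈ Icc 2 n, w i * q i := by
    rw [← sum_filter]
    congr 1
    ext i
    simp only [mem_filter, mem_Icc]
    omega
  have hright : ∑ i ∈ Icc 1 n, (if i + 1 ≤ n then w i * q (i + 1) else 0) =
      ∑ i ∈ Icc 2 n, w (i - 1) * q i := by
    rw [← sum_filter]
    refine sum_nbij' (· + 1) (· - 1) ?_ ?_ ?_ ?_ ?_ <;> intro i hi <;>
      simp only [mem_filter, mem_Icc] at hi ⊢ <;> first | omega | simp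
  have hterm : ∀ i, w i * nodeJump n x i f =
      (tanh ((x (i + 1) - x i) / 2) + tanh ((x i - x (i - 1)) / 2)) * (w i * f i)
        + (if 2 ≤ i then w i * q i else 0) - (if i + 1 ≤ n then w i * q (i + 1) else 0) := by
    intro i
    simp only [nodeJump, LinearMap.sub_apply, leftSlope_apply, rightSlope_apply, hq,
      Nat.add_sub_cancel]
    split_ifs <;> ring
  rw [sum_congr rfl fun i _ => hterm i, sum_sub_distrib, sum_add_distrib, hleft, hright,
    add_sub_assoc, ← sum_sub_distrib]
  congr 1
  refine sum_congr rfl fun i _ => ?_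
  rw [hq]
  ring

lemma nodeJump_congr {f g : ℕ → ℝ} (hfg : ∀ k ∈ Icc 1 n, f k = g k) {i : ℕ} (hi : i ∈ Icc 1 n) :
    nodeJump n x i f = nodeJump n x i g := by
  simp only [mem_Icc] at hfg hi
  have hl : 2 ≤ i → f (i - 1) = g (i - 1) := fun h => hfg _ (by omega)
  have hr : i + 1 ≤ n → f (i + 1) = g (i + 1) := fun h => hfg _ (by omega)
  simp only [nodeJump, LinearMap.sub_apply, leftSlope_apply, rightSlope_apply, hfg i hi]
  split_ifs with h2 h3 h3 <;> simp only [hl, hr, h2, h3]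

end

theorem sobolev_gram_inverse_quadratic_form_general
    (n : ℕ)
    (x : ℕ → ℝ)
    (hmono : ∀ i j : ℕ, 1 ≤ i → i < j → j ≤ n → x i < x j)
    (hxleft : x 0 = -x 1) (hxright : x (n + 1) = 2 - x n)
    (K : ℝ → ℝ → ℝ)
    (hK : ∀ s t, K s t =
      Real.cosh (min s t) * Real.cosh (1 - max s t) / Real.sinh 1)
    (G : Matrix (Fin n) (Fin n) ℝ)
    (hG : ∀ i j : Fin n, G i j = K (x ((i : ℕ) + 1)) (x ((j : ℕ) + 1)))
    (hGinv : IsUnit G.det) :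
    ∀ v : ℕ → ℝ,
      dotProduct (fun i : Fin n => v ((i : ℕ) + 1))
          ((G⁻¹).mulVec (fun i : Fin n => v ((i : ℕ) + 1)))
        = (∑ i ∈ Finset.Icc 1 n,
            (Real.tanh ((x (i + 1) - x i) / 2)
              + Real.tanh ((x i - x (i - 1)) / 2)) * v i ^ 2)
          + ∑ i ∈ Finset.Icc 2 n,
              (v i - v (i - 1)) ^ 2 / Real.sinh (x i - x (i - 1)) := by
  intro v
  obtain rfl : K = sobolevKernel := funext₂ hK
  set u := G⁻¹ *ᵥ fun i : Fin n => v (i + 1)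
  have hGu : G *ᵥ u = fun i : Fin n => v (i + 1) := by
    rw [mulVec_mulVec, mul_nonsing_inv G hGinv, one_mulVec]
  have hv : ∀ k ∈ Icc 1 n,
      v k = (∑ j : Fin n, u j • fun k => sobolevKernel (x k) (x (j + 1))) k := by
    intro k hk
    rw [mem_Icc] at hk
    obtain ⟨m, rfl⟩ : ∃ m : Fin n, k = m + 1 := ⟨⟨k - 1, by omega⟩, by simp only; omega⟩
    simpa [mulVec, dotProduct, hG, mul_comm] using (congrFun hGu m).symm
  have hjump : ∀ i : Fin n, nodeJump n x (i + 1) v = u i := by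
    intro i
    rw [nodeJump_congr hv (by simp), map_sum]
    simp [nodeJump_sobolevKernel hmono hxleft hxright, Fin.val_inj]
  calc dotProduct (fun i : Fin n => v (i + 1)) u
      = ∑ i : Fin n, v (i + 1) * nodeJump n x (i + 1) v := by simp [dotProduct, hjump]
    _ = ∑ i ∈ Icc 1 n, v i * nodeJump n x i v :=
      Fin.sum_univ_add_one_eq_sum_Icc n fun i => v i * nodeJump n x i v
    _ = _ := by simp only [sum_mul_nodeJump, ← sq]

/-- Explicit quadratic form of the inverse Gram matrix of the Sobolev `H¹(0,1)`
kernel at ordered points `0 ≤ x₁ < … < xₙ ≤ 1` (with the conventions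
`x₀ = −x₁`, `x_{n+1} = 2 − xₙ`):
`vᵀG⁻¹v = Σᵢ [tanh((xᵢ₊₁−xᵢ)/2) + tanh((xᵢ−xᵢ₋₁)/2)]vᵢ²
        + Σᵢ (vᵢ−vᵢ₋₁)²/sinh(xᵢ−xᵢ₋₁)`. -/
theorem sobolev_gram_inverse_quadratic_form
    (n : ℕ) (hn : 2 ≤ n)
    (x : ℕ → ℝ)
    (hx0 : 0 ≤ x 1) (hx1 : x n ≤ 1)
    (hmono : ∀ i j : ℕ, 1 ≤ i → i < j → j ≤ n → x i < x j)
    (hxleft : x 0 = -x 1) (hxright : x (n + 1) = 2 - x n)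
    (K : ℝ → ℝ → ℝ)
    (hK : ∀ s t, K s t =
      Real.cosh (min s t) * Real.cosh (1 - max s t) / Real.sinh 1)
    (G : Matrix (Fin n) (Fin n) ℝ)
    (hG : ∀ i j : Fin n, G i j = K (x ((i : ℕ) + 1)) (x ((j : ℕ) + 1)))
    (hGinv : IsUnit G.det) :
    ∀ v : ℕ → ℝ,
      dotProduct (fun i : Fin n => v ((i : ℕ) + 1))
          ((G⁻¹).mulVec (fun i : Fin n => v ((i : ℕ) + 1)))
        = (∑ i ∈ Finset.Icc 1 n,
            (Real.tanh ((x (i + 1) - x i) / 2)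
              + Real.tanh ((x i - x (i - 1)) / 2)) * v i ^ 2)
          + ∑ i ∈ Finset.Icc 2 n,
              (v i - v (i - 1)) ^ 2 / Real.sinh (x i - x (i - 1)) :=
  sobolev_gram_inverse_quadratic_form_general n x hmono hxleft hxright K hK G hG hGinv
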